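/- arXiv:1009.4094 — 5 statements merged into one kernel-verified Lean document; each statement's English description precedes it below -/
import Mathlib

section
/- Let (X,d) be a metric space and define the modified cross-ratio ⟨x1,x2,x3,x4⟩ = (min(d(x1,x3), d(x2,x4))) / (min(d(x1,x4), d(x2,x3))) for four distinct points. Then for all distinct x1,x2,x3,x4 in X, (1/3)·min(t, √t) ≤ ⟨x1,x2,x3,x4⟩ ≤ 3·max(t, √t), where t = [x1,x2,x3,x4] = (d(x1,x3)·d(x2,x4))/(d(x1,x4)·d(x2,x3)) is the usual cross-ratio. -/
/-!
Write `a, b` for the distances in the numerator of the cross-ratio `t`, `c, e` for those in its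
denominator, and use `min * max = product`. If `max c e ≤ 3 max a b`, then
`min a b / min c e = t · max c e / max a b ≤ 3t`. Otherwise the four-point inequalities
`c ≤ a + b + e` and `e ≤ a + b + c` force `max c e ≤ 3 min c e`, whence
`(min a b / min c e)² ≤ 3t`. The lower bound is the upper bound for the pairs exchanged, which
replaces `t` by `t⁻¹`.
-/

lemma max_inv_inv_of_pos {α : Type*} [Field α] [LinearOrder α] [IsStrictOrderedRing α]
    {a b : α} (ha : 0 < a) (hb : 0 < b) :
    max a⁻¹ b⁻¹ = (min a b)⁻¹ := by
  rcases le_total a b with h | h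
  · rw [min_eq_left h, max_eq_left (inv_anti₀ ha h)]
  · rw [min_eq_right h, max_eq_right (inv_anti₀ hb h)]

section CrossRatio

variable {a b c e : ℝ}

lemma min_div_min_le_of_max_le (ha : 0 < a) (hb : 0 < b) (hc : 0 < c) (he : 0 < e)
    (h : max c e ≤ 3 * max a b) :
    min a b / min c e ≤ 3 * (a * b / (c * e)) := by
  have hM : 0 < max a b := lt_max_of_lt_left ha
  calc min a b / min c e
      = a * b / (c * e) * (max c e / max a b) := by
        rw [← min_mul_max a b, ← min_mul_max c e]
        field_simp [(lt_min hc he).ne', hM.ne', (lt_max_of_lt_left hc).ne']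
    _ ≤ a * b / (c * e) * 3 := by
        gcongr
        rwa [div_le_iff₀ hM]
    _ = 3 * (a * b / (c * e)) := mul_comm _ _

lemma max_le_three_mul_min_of_le_add (h1 : c ≤ a + b + e) (h2 : e ≤ a + b + c)
    (h : 3 * max a b ≤ max c e) :
    max c e ≤ 3 * min c e := by
  have := le_max_left a b
  have := le_max_right a b
  rcases le_total c e with hce | hce
  · rw [max_eq_right hce] at h ⊢
    rw [min_eq_left hce]
    linarith
  · rw [max_eq_left hce] at h ⊢
    rw [min_eq_right hce]
    linarith

lemma min_div_min_le_of_max_le_three_mul_min (ha : 0 < a) (hb : 0 < b) (hc : 0 < c)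
    (he : 0 < e) (h : max c e ≤ 3 * min c e) :
    min a b / min c e ≤ 3 * √(a * b / (c * e)) := by
  have hm : 0 < min a b := lt_min ha hb
  have hn : 0 < min c e := lt_min hc he
  have hsq : (min a b / min c e) ^ 2 ≤ 3 * (a * b / (c * e)) := by
    rw [← min_mul_max a b, ← min_mul_max c e, div_pow, mul_div_assoc',
      div_le_div_iff₀ (by positivity) (by positivity)]
    have hmM : min a b ≤ max a b := min_le_max
    calc min a b ^ 2 * (min c e * max c e)
        ≤ min a b * max a b * (min c e * (3 * min c e)) := by gcongr; nlinarith
      _ = 3 * (min a b * max a b) * min c e ^ 2 := by ring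
  calc min a b / min c e ≤ √(3 * (a * b / (c * e))) :=
        Real.le_sqrt_of_sq_le hsq
    _ = √3 * √(a * b / (c * e)) := Real.sqrt_mul (by norm_num) _
    _ ≤ 3 * √(a * b / (c * e)) := by
        gcongr
        rw [Real.sqrt_le_left (by norm_num)]
        norm_num

lemma min_div_min_le_three_mul_max (ha : 0 < a) (hb : 0 < b) (hc : 0 < c) (he : 0 < e)
    (h1 : c ≤ a + b + e) (h2 : e ≤ a + b + c) :
    min a b / min c e ≤ 3 * max (a * b / (c * e)) √(a * b / (c * e)) := by
  rcases le_total (max c e) (3 * max a b) with h | h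
  · exact (min_div_min_le_of_max_le ha hb hc he h).trans (by gcongr; exact le_max_left _ _)
  · exact (min_div_min_le_of_max_le_three_mul_min ha hb hc he
      (max_le_three_mul_min_of_le_add h1 h2 h)).trans (by gcongr; exact le_max_right _ _)

lemma three_inv_mul_min_le_min_div_min (ha : 0 < a) (hb : 0 < b) (hc : 0 < c) (he : 0 < e)
    (h1 : a ≤ c + e + b) (h2 : b ≤ c + e + a) :
    1 / 3 * min (a * b / (c * e)) √(a * b / (c * e)) ≤ min a b / min c e := by
  have ht : 0 < a * b / (c * e) := by positivity
  have hswap := min_div_min_le_three_mul_max hc he ha hb h1 h2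
  rw [← inv_div (a * b), Real.sqrt_inv, max_inv_inv_of_pos ht (Real.sqrt_pos.2 ht)] at hswap
  calc 1 / 3 * min (a * b / (c * e)) √(a * b / (c * e))
      = (3 * (min (a * b / (c * e)) √(a * b / (c * e)))⁻¹)⁻¹ := by
        rw [mul_inv, inv_inv, one_div]
    _ ≤ (min c e / min a b)⁻¹ := inv_anti₀ (by positivity) hswap
    _ = min a b / min c e := inv_div _ _

end CrossRatio

theorem modified_crossRatio_comparison_general {X : Type*} [MetricSpace X] (x1 x2 x3 x4 : X)
    (h13 : x1 ≠ x3) (h14 : x1 ≠ x4)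
    (h23 : x2 ≠ x3) (h24 : x2 ≠ x4) :
    (1 / 3) * min (dist x1 x3 * dist x2 x4 / (dist x1 x4 * dist x2 x3))
        (Real.sqrt (dist x1 x3 * dist x2 x4 / (dist x1 x4 * dist x2 x3)))
      ≤ min (dist x1 x3) (dist x2 x4) / min (dist x1 x4) (dist x2 x3) ∧
    min (dist x1 x3) (dist x2 x4) / min (dist x1 x4) (dist x2 x3)
      ≤ 3 * max (dist x1 x3 * dist x2 x4 / (dist x1 x4 * dist x2 x3))
        (Real.sqrt (dist x1 x3 * dist x2 x4 / (dist x1 x4 * dist x2 x3))) := by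
  have h13' := dist_pos.2 h13
  have h24' := dist_pos.2 h24
  have h14' := dist_pos.2 h14
  have h23' := dist_pos.2 h23
  exact ⟨three_inv_mul_min_le_min_div_min h13' h24' h14' h23'
      (by linarith [dist_triangle4 x1 x4 x2 x3, dist_comm x4 x2])
      (by linarith [dist_triangle4 x2 x3 x1 x4, dist_comm x3 x1]),
    min_div_min_le_three_mul_max h13' h24' h14' h23'
      (by linarith [dist_triangle4 x1 x3 x2 x4, dist_comm x3 x2])
      (by linarith [dist_triangle4 x2 x4 x1 x3, dist_comm x4 x1])⟩

/-- Comparison between the modified cross-ratio and the usual cross-ratio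
in a metric space, for four pairwise distinct points. -/
theorem modified_crossRatio_comparison {X : Type*} [MetricSpace X] (x1 x2 x3 x4 : X)
    (h12 : x1 ≠ x2) (h13 : x1 ≠ x3) (h14 : x1 ≠ x4)
    (h23 : x2 ≠ x3) (h24 : x2 ≠ x4) (h34 : x3 ≠ x4) :
    (1 / 3) * min (dist x1 x3 * dist x2 x4 / (dist x1 x4 * dist x2 x3))
        (Real.sqrt (dist x1 x3 * dist x2 x4 / (dist x1 x4 * dist x2 x3)))
      ≤ min (dist x1 x3) (dist x2 x4) / min (dist x1 x4) (dist x2 x3) ∧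
    min (dist x1 x3) (dist x2 x4) / min (dist x1 x4) (dist x2 x3)
      ≤ 3 * max (dist x1 x3 * dist x2 x4 / (dist x1 x4 * dist x2 x3))
        (Real.sqrt (dist x1 x3 * dist x2 x4 / (dist x1 x4 * dist x2 x3))) :=
  modified_crossRatio_comparison_general x1 x2 x3 x4 h13 h14 h23 h24
end

section
/- Let J ⊂ Ĉ be a Jordan curve such that each of the two closed Jordan regions U and V bounded by J contains a pair of antipodal points of the sphere. Then J itself contains a pair of antipodal points. -/
open Set

private lemma conn_split {C U V : Set (EuclideanSpace ℝ (Fin 3))}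
    (hC : IsPreconnected C) (hU : IsClosed U) (hV : IsClosed V)
    (hsub : C ⊆ U ∪ V) (hdisj : C ∩ (U ∩ V) = ∅) : C ⊆ U ∨ C ⊆ V := by
  by_contra h
  push_neg at h
  obtain ⟨x, hxC, hxU⟩ := not_subset.mp h.1
  obtain ⟨y, hyC, hyV⟩ := not_subset.mp h.2
  have := (isPreconnected_closed_iff.mp hC) U V hU hV hsub
    ⟨y, hyC, (hsub hyC).resolve_right hyV⟩ ⟨x, hxC, (hsub hxC).resolve_left hxU⟩
  exact this.ne_empty hdisj

private lemma key {U V J : Set (EuclideanSpace ℝ (Fin 3))}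
    (hUVJ : U ∩ V = J) (hUcl : IsClosed U) (hVcl : IsClosed V)
    (hVconn : IsPreconnected V)
    (hSneg : ∀ x, x ∈ U ∪ V → -x ∈ U ∪ V)
    (hVa : ∃ p ∈ V, -p ∈ V)
    (hJne : J.Nonempty)
    (hcon : ∀ p ∈ J, -p ∉ J)
    (hnJ : Neg.neg '' J ⊆ U) : False := by
  have hJV : J ⊆ V := hUVJ ▸ inter_subset_right
  have hnVconn : IsPreconnected (Neg.neg '' V) :=
    hVconn.image _ continuous_neg.continuousOn
  have hnVsub : Neg.neg '' V ⊆ U ∪ V := by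
    rintro x ⟨v, hv, rfl⟩
    exact hSneg v (Or.inr hv)
  have hnVdisj : (Neg.neg '' V) ∩ (U ∩ V) = ∅ := by
    rw [eq_empty_iff_forall_notMem]
    rintro x ⟨⟨v, hv, rfl⟩, hUV2⟩
    rw [hUVJ] at hUV2
    have hvU : v ∈ U := hnJ ⟨-v, hUV2, neg_neg v⟩
    have hvJ : v ∈ J := by rw [← hUVJ]; exact ⟨hvU, hv⟩
    exact hcon (-v) hUV2 (by simpa using hvJ)
  rcases conn_split hnVconn hUcl hVcl hnVsub hnVdisj with hcase | hcase
  · -- -V ⊆ U : the antipodal pair of V lies in J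
    obtain ⟨p, hp, hnp⟩ := hVa
    have hnpU : -p ∈ U := hcase ⟨p, hp, rfl⟩
    have hpU : p ∈ U := by
      have : p ∈ Neg.neg '' V := ⟨-p, hnp, neg_neg p⟩
      exact hcase this
    exact hcon p (hUVJ ▸ ⟨hpU, hp⟩) (hUVJ ▸ ⟨hnpU, hnp⟩)
  · -- -V ⊆ V : then -J ⊆ U ∩ V = J
    obtain ⟨j, hj⟩ := hJne
    have h1 : -j ∈ U := hnJ ⟨j, hj, rfl⟩
    have h2 : -j ∈ V := hcase ⟨j, hJV hj, rfl⟩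
    exact hcon j hj (hUVJ ▸ ⟨h1, h2⟩)

/-- Let `J` be a Jordan curve on the unit sphere `S ⊆ ℝ³`, and `U`, `V` the two closed
Jordan regions it bounds (`U ∪ V = S`, `U ∩ V = J`). If `U` and `V` each contain a pair
of antipodal points, then so does `J`. -/
theorem jordan_curve_antipodal (S J U V : Set (EuclideanSpace ℝ (Fin 3)))
    (hS : S = Metric.sphere (0 : EuclideanSpace ℝ (Fin 3)) 1)
    (hJS : J ⊆ S)
    (hJcirc : Nonempty (↥J ≃ₜ ↥(Metric.sphere (0 : ℂ) 1)))
    (hUdisk : Nonempty (↥U ≃ₜ ↥(Metric.closedBall (0 : ℂ) 1)))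
    (hVdisk : Nonempty (↥V ≃ₜ ↥(Metric.closedBall (0 : ℂ) 1)))
    (hUV : U ∪ V = S) (hUVJ : U ∩ V = J)
    (hUa : ∃ p ∈ U, -p ∈ U) (hVa : ∃ p ∈ V, -p ∈ V) :
    ∃ p ∈ J, -p ∈ J := by
  by_contra hcontra
  push_neg at hcontra
  obtain ⟨eJ⟩ := hJcirc
  obtain ⟨eU⟩ := hUdisk
  obtain ⟨eV⟩ := hVdisk
  -- ambient facts
  have hball : IsConnected (Metric.closedBall (0 : ℂ) 1) :=
    (convex_closedBall (0:ℂ) 1).isConnected (Metric.nonempty_closedBall.mpr zero_le_one)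
  have hballC : ConnectedSpace ↥(Metric.closedBall (0 : ℂ) 1) :=
    Subtype.connectedSpace hball
  have hballK : CompactSpace ↥(Metric.closedBall (0 : ℂ) 1) :=
    isCompact_iff_compactSpace.mp (ProperSpace.isCompact_closedBall _ _)
  -- U, V closed
  have hUcl : IsClosed U :=
    (isCompact_iff_compactSpace.mpr (eU.symm.compactSpace)).isClosed
  have hVcl : IsClosed V :=
    (isCompact_iff_compactSpace.mpr (eV.symm.compactSpace)).isClosed
  -- U, V connected
  have hUconn : IsPreconnected U :=
    (isConnected_iff_connectedSpace.mpr
      (eU.symm.surjective.connectedSpace eU.symm.continuous)).isPreconnected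
  have hVconn : IsPreconnected V :=
    (isConnected_iff_connectedSpace.mpr
      (eV.symm.surjective.connectedSpace eV.symm.continuous)).isPreconnected
  -- J nonempty and connected
  have hcircle : IsConnected (Metric.sphere (0 : ℂ) 1) := by
    apply isConnected_sphere _ (0:ℂ) zero_le_one
    rw [Complex.rank_real_complex]
    norm_num
  have hJne : J.Nonempty := by
    have : Nonempty ↥J := ⟨eJ.symm ⟨1, by simp⟩⟩
    exact nonempty_subtype.mp this
  haveI := Subtype.connectedSpace hcircle
  have hJconn : IsPreconnected J :=
    (isConnected_iff_connectedSpace.mpr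
      (eJ.symm.surjective.connectedSpace eJ.symm.continuous)).isPreconnected
  -- the sphere is antipodally symmetric
  have hSneg : ∀ x, x ∈ U ∪ V → -x ∈ U ∪ V := by
    intro x hx
    rw [hUV, hS] at hx ⊢
    simpa using hx
  -- -J lies in U ∪ V and misses J
  have hnJconn : IsPreconnected (Neg.neg '' J) :=
    hJconn.image _ continuous_neg.continuousOn
  have hJU : J ⊆ U := by rw [← hUVJ]; exact inter_subset_left
  have hnJsub : Neg.neg '' J ⊆ U ∪ V := by
    rintro x ⟨j, hj, rfl⟩
    exact hSneg j (Or.inl (hJU hj))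
  have hnJdisj : (Neg.neg '' J) ∩ (U ∩ V) = ∅ := by
    rw [eq_empty_iff_forall_notMem]
    rintro x ⟨⟨j, hj, rfl⟩, hx⟩
    rw [hUVJ] at hx
    exact hcontra (-j) hx (by simpa using hj)
  rcases conn_split hnJconn hUcl hVcl hnJsub hnJdisj with hcase | hcase
  · exact key hUVJ hUcl hVcl hVconn hSneg hVa hJne hcontra hcase
  · refine key (V := U) (by rw [inter_comm]; exact hUVJ) hVcl hUcl hUconn
      (fun x hx => by rw [union_comm] at hx ⊢; exact hSneg x hx) hUa hJne hcontra hcase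
end

section
/- Every finitely connected circle domain V in the Riemann sphere is 1-LLC: for every open or closed round disk B in Ĉ, the set B ∩ V is path-connected. Consequently both LLC conditions hold with constant λ = 1: any two points of V within a ball B(a,r) can be joined by a continuum in V ∩ B(a,r), and any two points of V outside a ball B(a,r) can be joined by a continuum in V avoiding B(a,r). -/
/-
Enlarge the omitted disks slightly to open balls `U i` whose closures still meet the sphere in
pairwise disjoint sets and miss the two given points of the cap `B`. Join the two points inside
`B` along a circle, then reroute the path around each `U i` in turn: between its first and last
contact with `frontier (U i)` it is replaced by an arc of the circle `∂(U i) ∩ S` inside `B`.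
Such arcs exist because a linear functional restricted to a circle, `α cos θ + β sin θ`, is
quasiconcave on a suitable period, so one of the two arcs between two points of a cap stays in
the cap. In dimension at least `3`, any two points of a slice `S ∩ {x | ⟪c, x⟫ = t}` lie on a
circle inside that slice.
-/

open Metric Set Real Filter Topology Function
open scoped RealInnerProductSpace

section Topology

variable {X : Type*} [TopologicalSpace X] {x y : X}

theorem JoinedIn.of_mapsTo_uIcc {F : Set X} {f : ℝ → X} (hf : Continuous f) {a b : ℝ}
    (h : MapsTo f (uIcc a b) F) : JoinedIn F (f a) (f b) :=
  (((convex_uIcc a b).isPathConnected nonempty_uIcc).image hf |>.joinedIn _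
    (mem_image_of_mem f left_mem_uIcc) _ (mem_image_of_mem f right_mem_uIcc)).mono
    h.image_subset

/-- The first time `γ` reaches `closure U` is a point of `frontier U` reached from `x` without
entering `U`. -/
theorem Path.exists_mem_frontier_joinedIn_diff {U : Set X} (γ : Path x y) (hU : IsOpen U)
    (hx : x ∉ U) (hit : ∃ t, γ t ∈ U) : ∃ p ∈ frontier U, JoinedIn (range γ \ U) x p := by
  obtain ⟨t₁, ht₁⟩ := hit
  set T := Ici 0 ∩ γ.extend ⁻¹' closure U
  have hT : IsClosed T := isClosed_Ici.inter (isClosed_closure.preimage γ.continuous_extend)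
  have hTne : T.Nonempty := ⟨t₁, t₁.2.1, by simpa using subset_closure ht₁⟩
  have hTbdd : BddBelow T := ⟨0, fun _ ht => ht.1⟩
  obtain ⟨ht₀, ht₀U⟩ := hT.csInf_mem hTne hTbdd
  set t₀ := sInf T
  have hbefore : ∀ s < t₀, γ.extend s ∉ U := fun s hs hsU => by
    rcases lt_or_ge s 0 with hs0 | hs0
    · exact hx (by rwa [γ.extend_of_le_zero hs0.le] at hsU)
    · exact notMem_of_lt_csInf hs hTbdd ⟨hs0, subset_closure hsU⟩
  have hat : γ.extend t₀ ∉ U := fun hU₀ => by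
    have hev : ∀ᶠ s in 𝓝[<] t₀, γ.extend s ∈ U :=
      (γ.continuous_extend.continuousAt.eventually_mem (hU.mem_nhds hU₀)).filter_mono
        nhdsWithin_le_nhds
    obtain ⟨s, hsU, hs⟩ := (hev.and self_mem_nhdsWithin).exists
    exact hbefore s hs hsU
  refine ⟨γ.extend t₀, hU.frontier_eq ▸ ⟨ht₀U, hat⟩, ?_⟩
  have hpath : MapsTo γ.extend (uIcc 0 t₀) (range γ \ U) := fun s hs => by
    rw [uIcc_of_le ht₀] at hs
    exact ⟨γ.extend_range ▸ mem_range_self s, hs.2.eq_or_lt.elim (fun h => h ▸ hat) (hbefore s)⟩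
  simpa using JoinedIn.of_mapsTo_uIcc γ.continuous_extend hpath

/-- Cut the path at its first and last contact with `closure U`; both cut points lie in
`frontier U`. -/
theorem JoinedIn.diff_of_frontier {S U : Set X} (h : JoinedIn S x y) (hU : IsOpen U)
    (hx : x ∉ U) (hy : y ∉ U)
    (hfr : ∀ p ∈ S ∩ frontier U, ∀ q ∈ S ∩ frontier U, JoinedIn (S \ U) p q) :
    JoinedIn (S \ U) x y := by
  obtain ⟨γ, hγ⟩ := h
  by_cases hit : ∃ t, γ t ∈ U
  · have hγS : range γ \ U ⊆ S \ U := sdiff_subset_sdiff_left (range_subset_iff.2 hγ)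
    obtain ⟨p, hp, hxp⟩ := γ.exists_mem_frontier_joinedIn_diff hU hx hit
    obtain ⟨t, ht⟩ := hit
    obtain ⟨q, hq, hyq⟩ := γ.symm.exists_mem_frontier_joinedIn_diff hU hy
      ⟨unitInterval.symm t, by simpa using ht⟩
    rw [γ.symm_range] at hyq
    exact ((hxp.mono hγS).trans (hfr p ⟨(hγS hxp.target_mem).1, hp⟩ q
      ⟨(hγS hyq.target_mem).1, hq⟩)).trans (hyq.mono hγS).symm
  · exact ⟨γ, fun t => ⟨hγ t, fun ht => hit ⟨t, ht⟩⟩⟩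

theorem JoinedIn.diff_iUnion_of_frontier {ι : Type*} [Finite ι] {T : Set X} {U : ι → Set X}
    (h : JoinedIn T x y) (hU : ∀ i, IsOpen (U i)) (hx : x ∉ ⋃ i, U i) (hy : y ∉ ⋃ i, U i)
    (hfr : ∀ i, ∀ p ∈ T ∩ frontier (U i), ∀ q ∈ T ∩ frontier (U i),
      JoinedIn (T \ ⋃ j, U j) p q) :
    JoinedIn (T \ ⋃ i, U i) x y := by
  classical
  have := Fintype.ofFinite ι
  suffices ∀ s : Finset ι, JoinedIn (T \ ⋃ i ∈ s, U i) x y by simpa using this Finset.univ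
  intro s
  induction s using Finset.induction_on with
  | empty => simpa using h
  | insert j s _ ih =>
    rw [Finset.set_biUnion_insert, union_comm, ← sdiff_sdiff]
    refine ih.diff_of_frontier (hU j) (fun hj => hx (mem_iUnion_of_mem j hj))
      (fun hj => hy (mem_iUnion_of_mem j hj)) fun p hp q hq => ?_
    refine (hfr j p ⟨hp.1.1, hp.2⟩ q ⟨hq.1.1, hq.2⟩).mono ?_
    rw [sdiff_sdiff]
    exact sdiff_subset_sdiff_right
      (union_subset (iUnion₂_subset fun i _ => subset_iUnion U i) (subset_iUnion U j))

theorem JoinedIn.exists_isCompact_isConnected {F : Set X} (h : JoinedIn F x y) :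
    ∃ K : Set X, IsCompact K ∧ IsConnected K ∧ x ∈ K ∧ y ∈ K ∧ K ⊆ F := by
  obtain ⟨γ, hγ⟩ := h
  exact ⟨range γ, isCompact_range γ.continuous, isConnected_range γ.continuous,
    ⟨0, γ.source⟩, ⟨1, γ.target⟩, range_subset_iff.2 hγ⟩

end Topology

section Metric

variable {X : Type*} [PseudoMetricSpace X] {K : Set X}

theorem IsCompact.eventually_disjoint_inter_closedBall_add (hK : IsCompact K) {c c' : X}
    {ρ ρ' : ℝ} (h : Disjoint (K ∩ closedBall c ρ) (K ∩ closedBall c' ρ')) :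
    ∀ᶠ δ in 𝓝 0, Disjoint (K ∩ closedBall c (ρ + δ)) (K ∩ closedBall c' (ρ' + δ)) := by
  obtain ⟨m, hm, hmK⟩ := hK.exists_forall_le' (a := 0)
    (f := fun x => max (dist x c - ρ) (dist x c' - ρ')) (by fun_prop) fun x hx => by
      by_contra! hle
      rw [max_le_iff, sub_nonpos, sub_nonpos] at hle
      exact disjoint_left.1 h ⟨hx, hle.1⟩ ⟨hx, hle.2⟩
  filter_upwards [eventually_lt_nhds hm] with δ hδ
  refine disjoint_left.2 fun x hx hx' => (hmK x hx.1).not_gt ?_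
  exact (max_le (by linarith [mem_closedBall.1 hx.2])
    (by linarith [mem_closedBall.1 hx'.2])).trans_lt hδ

theorem IsCompact.eventually_pairwise_disjoint_inter_closedBall_add (hK : IsCompact K)
    {ι : Type*} [Finite ι] {c : ι → X} {ρ : ι → ℝ}
    (h : Pairwise (Disjoint on fun i => K ∩ closedBall (c i) (ρ i))) :
    ∀ᶠ δ in 𝓝 0, Pairwise (Disjoint on fun i => K ∩ closedBall (c i) (ρ i + δ)) := by
  refine eventually_all.2 fun i => eventually_all.2 fun j => ?_
  by_cases hij : i = j
  · exact .of_forall fun _ h => (h hij).elim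
  · exact (hK.eventually_disjoint_inter_closedBall_add (h hij)).mono fun _ hδ _ => hδ

theorem image_val_preimage_diff_iUnion_closedBall {S : Set X} (B : Set X) {ι : Type*} (c : ι → S)
    (ρ : ι → ℝ) :
    ((↑) : S → X) '' ((↑) ⁻¹' B \ ⋃ i, closedBall (c i) (ρ i)) =
      (S ∩ B) \ ⋃ i, closedBall (c i : X) (ρ i) := by
  ext z
  simp only [mem_image, Set.mem_sdiff, mem_preimage, mem_iUnion, mem_closedBall, Subtype.dist_eq,
    Subtype.exists, exists_and_right, exists_eq_right, mem_inter_iff]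
  tauto

end Metric

theorem Real.min_cos_le_cos {s₁ s₂ s : ℝ} (h₁ : -π ≤ s₁) (h₂ : s₂ ≤ π) (hs : s ∈ Icc s₁ s₂) :
    min (cos s₁) (cos s₂) ≤ cos s := by
  rcases le_total s 0 with h | h
  · rw [← cos_neg s, ← cos_neg s₁]
    exact (min_le_left _ _).trans
      (cos_le_cos_of_nonneg_of_le_pi (neg_nonneg.2 h) (by linarith) (by linarith [hs.1]))
  · exact (min_le_right _ _).trans (cos_le_cos_of_nonneg_of_le_pi h h₂ hs.2)

/-- Writing `A cos + B sin = M cos (· - φ)`, this function is quasiconcave on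
`[φ - π, φ + π]`; the angles are moved into that period. -/
theorem exists_cos_sin_eq_forall_uIcc_min_le (A B θ₁ θ₂ : ℝ) :
    ∃ s₁ s₂ : ℝ, cos s₁ = cos θ₁ ∧ sin s₁ = sin θ₁ ∧ cos s₂ = cos θ₂ ∧ sin s₂ = sin θ₂ ∧
      ∀ s ∈ uIcc s₁ s₂,
        min (A * cos θ₁ + B * sin θ₁) (A * cos θ₂ + B * sin θ₂) ≤ A * cos s + B * sin s := by
  set ζ : ℂ := ⟨A, B⟩
  set φ := ζ.arg
  have hpolar : ∀ s, A * cos s + B * sin s = ‖ζ‖ * cos (s - φ) := fun s => by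
    rw [cos_sub]
    linear_combination -cos s * Complex.norm_mul_cos_arg ζ - sin s * Complex.norm_mul_sin_arg ζ
  have hlift : ∀ θ, ∃ s ∈ Ioc (φ - π) (φ + π), cos s = cos θ ∧ sin s = sin θ := fun θ => by
    have hmem := toIocMod_mem_Ioc two_pi_pos (φ - π) θ
    have hs : toIocMod two_pi_pos (φ - π) θ = θ - toIocDiv two_pi_pos (φ - π) θ * (2 * π) := by
      linarith [toIocMod_sub_self_eq_mul two_pi_pos (φ - π) θ]
    exact ⟨_, ⟨hmem.1, by linarith [hmem.2]⟩, by rw [hs, cos_sub_int_mul_two_pi],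
      by rw [hs, sin_sub_int_mul_two_pi]⟩
  obtain ⟨s₁, hs₁, hc₁, hn₁⟩ := hlift θ₁
  obtain ⟨s₂, hs₂, hc₂, hn₂⟩ := hlift θ₂
  refine ⟨s₁, s₂, hc₁, hn₁, hc₂, hn₂, fun s hs => ?_⟩
  rw [← hc₁, ← hn₁, ← hc₂, ← hn₂, hpolar, hpolar, hpolar, ← mul_min_of_nonneg _ _ (norm_nonneg ζ)]
  refine mul_le_mul_of_nonneg_left ?_ (norm_nonneg ζ)
  rcases le_total s₁ s₂ with h | h
  · rw [uIcc_of_le h] at hs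
    exact Real.min_cos_le_cos (by linarith [hs₁.1]) (by linarith [hs₂.2])
      ⟨by linarith [hs.1], by linarith [hs.2]⟩
  · rw [uIcc_of_ge h] at hs
    rw [min_comm]
    exact Real.min_cos_le_cos (by linarith [hs₂.1]) (by linarith [hs₁.2])
      ⟨by linarith [hs.1], by linarith [hs.2]⟩

section Ellipse

variable {E : Type*} [AddCommGroup E] [Module ℝ E] [TopologicalSpace E] [IsTopologicalAddGroup E]
  [ContinuousSMul ℝ E]

noncomputable def ellipseMap (z u w : E) (s : ℝ) : E := z + cos s • u + sin s • w

theorem continuous_ellipseMap (z u w : E) : Continuous (ellipseMap z u w) := by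
  unfold ellipseMap; fun_prop

theorem joinedIn_ellipseMap (ℓ : E →ₗ[ℝ] ℝ) (z u w : E) (θ₁ θ₂ : ℝ) :
    JoinedIn (range (ellipseMap z u w) ∩
        {x | min (ℓ (ellipseMap z u w θ₁)) (ℓ (ellipseMap z u w θ₂)) ≤ ℓ x})
      (ellipseMap z u w θ₁) (ellipseMap z u w θ₂) := by
  obtain ⟨s₁, s₂, hc₁, hn₁, hc₂, hn₂, hmin⟩ :=
    exists_cos_sin_eq_forall_uIcc_min_le (ℓ u) (ℓ w) θ₁ θ₂
  have hℓ : ∀ s, ℓ (ellipseMap z u w s) = ℓ z + (ℓ u * cos s + ℓ w * sin s) := fun s => by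
    simp only [ellipseMap, map_add, map_smul, smul_eq_mul]; ring
  have h₁ : ellipseMap z u w s₁ = ellipseMap z u w θ₁ := by simp only [ellipseMap, hc₁, hn₁]
  have h₂ : ellipseMap z u w s₂ = ellipseMap z u w θ₂ := by simp only [ellipseMap, hc₂, hn₂]
  rw [← h₁, ← h₂]
  refine JoinedIn.of_mapsTo_uIcc (continuous_ellipseMap z u w)
    fun s hs => ⟨mem_range_self s, ?_⟩
  simp only [mem_ofPred_eq, h₁, h₂, hℓ, min_add_add_left]
  linarith [hmin s hs]

end Ellipse

section InnerProductSpace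

variable {E : Type*} [NormedAddCommGroup E] [InnerProductSpace ℝ E]

theorem exists_ne_zero_inner_eq_zero_inner_eq_zero (hE : 3 ≤ Module.finrank ℝ E) (c u : E) :
    ∃ w ≠ 0, ⟪c, w⟫ = 0 ∧ ⟪u, w⟫ = 0 := by
  classical
  have : FiniteDimensional ℝ E := Module.finite_of_finrank_pos (by omega)
  set K := Submodule.span ℝ (({c, u} : Finset E) : Set E)
  have hK : Module.finrank ℝ K ≤ 2 :=
    (finrank_span_finset_le_card _).trans (Finset.card_insert_le _ _)
  have hKperp : Kᗮ ≠ ⊥ := by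
    intro h
    have := K.finrank_add_finrank_orthogonal
    rw [h, finrank_bot] at this
    omega
  obtain ⟨w, hw, hw0⟩ := Submodule.exists_mem_ne_zero_of_ne_bot hKperp
  exact ⟨w, hw0, Submodule.inner_right_of_mem_orthogonal (Submodule.subset_span (by simp)) hw,
    Submodule.inner_right_of_mem_orthogonal (Submodule.subset_span (by simp)) hw⟩

theorem exists_inner_eq_zero_norm_eq_nonneg_smul (hE : 3 ≤ Module.finrank ℝ E) {c u v : E}
    (hcv : ⟪c, v⟫ = 0) (huv : ⟪u, v⟫ = 0) {R : ℝ} (hR : 0 < R) :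
    ∃ w : E, ⟪c, w⟫ = 0 ∧ ⟪u, w⟫ = 0 ∧ ‖w‖ = R ∧ ∃ β : ℝ, 0 ≤ β ∧ v = β • w := by
  rcases eq_or_ne v 0 with rfl | hv0
  · obtain ⟨w₀, hw₀, hcw₀, huw₀⟩ := exists_ne_zero_inner_eq_zero_inner_eq_zero hE c u
    refine ⟨(R / ‖w₀‖) • w₀, by simp [inner_smul_right, hcw₀], by simp [inner_smul_right, huw₀],
      ?_, 0, le_rfl, by simp⟩
    rw [norm_smul, Real.norm_of_nonneg (by positivity),
      div_mul_cancel₀ _ (norm_ne_zero_iff.2 hw₀)]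
  · refine ⟨(R / ‖v‖) • v, by simp [inner_smul_right, hcv], by simp [inner_smul_right, huv],
      ?_, ‖v‖ / R, by positivity, ?_⟩
    · rw [norm_smul, Real.norm_of_nonneg (by positivity),
        div_mul_cancel₀ _ (norm_ne_zero_iff.2 hv0)]
    · rw [smul_smul, div_mul_div_cancel₀ hR.ne', div_self (norm_ne_zero_iff.2 hv0), one_smul]

theorem exists_cos_smul_add_sin_smul_eq (hE : 3 ≤ Module.finrank ℝ E) {c u v : E}
    (hu : ⟪c, u⟫ = 0) (hv : ⟪c, v⟫ = 0) (huv : ‖u‖ = ‖v‖) :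
    ∃ w : E, ⟪c, w⟫ = 0 ∧ ⟪u, w⟫ = 0 ∧ ‖w‖ = ‖u‖ ∧ ∃ θ : ℝ, cos θ • u + sin θ • w = v := by
  rcases eq_or_ne u 0 with rfl | hu0
  · exact ⟨0, by simp, by simp, by simp, 0, by simpa [eq_comm] using huv⟩
  set R := ‖u‖
  have hR : 0 < R := norm_pos_iff.2 hu0
  set α := ⟪u, v⟫ / R ^ 2
  have hcv' : ⟪c, v - α • u⟫ = 0 := by simp [inner_sub_right, inner_smul_right, hu, hv]
  have huv' : ⟪u, v - α • u⟫ = 0 := by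
    simp only [inner_sub_right, inner_smul_right, real_inner_self_eq_norm_sq, α]
    field_simp; ring
  obtain ⟨w, hcw, huw, hw, β, hβ, hv'w⟩ :=
    exists_inner_eq_zero_norm_eq_nonneg_smul hE hcv' huv' hR
  have hv_eq : v = α • u + β • w := by rw [← hv'w, add_sub_cancel]
  have hαβ : α ^ 2 + β ^ 2 = 1 := by
    have h : ‖v‖ ^ 2 = ‖α • u + β • w‖ ^ 2 := by rw [← hv_eq]
    rw [norm_add_sq_real, real_inner_smul_left, real_inner_smul_right, huw, norm_smul, norm_smul,
      mul_pow, mul_pow, Real.norm_eq_abs, Real.norm_eq_abs, sq_abs, sq_abs, hw, ← huv] at h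
    apply mul_left_cancel₀ (pow_ne_zero 2 hR.ne')
    linear_combination -h
  refine ⟨w, hcw, huw, hw, arccos α, ?_⟩
  rw [cos_arccos (by nlinarith) (by nlinarith), sin_arccos,
    show 1 - α ^ 2 = β ^ 2 by linarith, sqrt_sq hβ, hv_eq]

theorem exists_ellipseMap_eq (hE : 3 ≤ Module.finrank ℝ E) {c p q : E} (hn : ‖p‖ = ‖q‖)
    (hc : ⟪c, p⟫ = ⟪c, q⟫) :
    ∃ (z u w : E) (θ : ℝ), ellipseMap z u w 0 = p ∧ ellipseMap z u w θ = q ∧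
      ∀ s, ‖ellipseMap z u w s‖ = ‖p‖ ∧ ⟪c, ellipseMap z u w s⟫ = ⟪c, p⟫ := by
  set z := (⟪c, p⟫ / ⟪c, c⟫) • c
  have hperp : ∀ x, ⟪c, x⟫ = ⟪c, p⟫ → ⟪c, x - z⟫ = 0 := fun x hx => by
    rcases eq_or_ne c 0 with rfl | hc0
    · simp
    · rw [inner_sub_right, real_inner_smul_right, hx,
        div_mul_cancel₀ _ ((inner_self_ne_zero (𝕜 := ℝ)).2 hc0), sub_self]
  have hpyth : ∀ x, ⟪c, x⟫ = 0 → ‖z + x‖ ^ 2 = ‖z‖ ^ 2 + ‖x‖ ^ 2 := fun x hx => by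
    rw [norm_add_sq_real, real_inner_smul_left, hx]; ring
  clear_value z
  have hu := hperp p rfl
  have hv := hperp q hc.symm
  have hp := hpyth _ hu
  have hq := hpyth _ hv
  rw [add_sub_cancel] at hp hq
  have huv : ‖p - z‖ = ‖q - z‖ := by
    refine (sq_eq_sq₀ (norm_nonneg _) (norm_nonneg _)).1 ?_
    linarith [congrArg (· ^ 2) hn]
  obtain ⟨w, hcw, huw, hw, θ, hθ⟩ := exists_cos_smul_add_sin_smul_eq hE hu hv huv
  have hcirc : ∀ s, ⟪c, cos s • (p - z) + sin s • w⟫ = 0 := fun s => by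
    simp [inner_add_right, real_inner_smul_right, hu, hcw]
  refine ⟨z, p - z, w, θ, by simp [ellipseMap], by rw [ellipseMap, add_assoc, hθ, add_sub_cancel],
    fun s => ⟨?_, ?_⟩⟩
  · rw [ellipseMap, add_assoc]
    refine (sq_eq_sq₀ (norm_nonneg _) (norm_nonneg _)).1 ?_
    rw [hpyth _ (hcirc s), hp, norm_add_sq_real, real_inner_smul_left, real_inner_smul_right, huw,
      norm_smul, norm_smul, mul_pow, mul_pow, Real.norm_eq_abs, Real.norm_eq_abs, sq_abs, sq_abs,
      hw]
    linear_combination ‖p - z‖ ^ 2 * sin_sq_add_cos_sq s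
  · rw [ellipseMap, add_assoc, inner_add_right, hcirc, add_zero, eq_comm, ← sub_eq_zero,
      ← inner_sub_right, hu]

theorem joinedIn_norm_eq_inner_eq (hE : 3 ≤ Module.finrank ℝ E) (a : E) {c p q : E}
    (hn : ‖p‖ = ‖q‖) (hc : ⟪c, p⟫ = ⟪c, q⟫) :
    JoinedIn {x | ‖x‖ = ‖p‖ ∧ ⟪c, x⟫ = ⟪c, p⟫ ∧ min ⟪a, p⟫ ⟪a, q⟫ ≤ ⟪a, x⟫} p q := by
  obtain ⟨z, u, w, θ, rfl, rfl, hcirc⟩ := exists_ellipseMap_eq hE hn hc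
  refine (joinedIn_ellipseMap (innerₗ E a) z u w 0 θ).mono ?_
  rintro _ ⟨⟨s, rfl⟩, hs⟩
  exact ⟨(hcirc s).1, (hcirc s).2, hs⟩

theorem dist_sq_eq_norm_sq_sub_inner (x a : E) :
    dist x a ^ 2 = ‖x‖ ^ 2 - 2 * ⟪a, x⟫ + ‖a‖ ^ 2 := by
  rw [dist_eq_norm, norm_sub_sq_real, real_inner_comm]

theorem dist_le_dist_of_norm_eq_of_inner_le {x p a : E} (hn : ‖x‖ = ‖p‖) (h : ⟪a, p⟫ ≤ ⟪a, x⟫) :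
    dist x a ≤ dist p a := by
  refine (pow_le_pow_iff_left₀ dist_nonneg dist_nonneg two_ne_zero).1 ?_
  rw [dist_sq_eq_norm_sq_sub_inner, dist_sq_eq_norm_sq_sub_inner, hn]
  linarith

theorem inner_eq_of_norm_eq_of_dist_eq {p q c : E} (hn : ‖p‖ = ‖q‖) (h : dist p c = dist q c) :
    ⟪c, p⟫ = ⟪c, q⟫ := by
  have := congrArg (· ^ 2) h
  simp only [dist_sq_eq_norm_sq_sub_inner, hn] at this
  linarith

/-- The trace of `B` on the sphere of radius `R` is a cap `{x | t ≤ ⟪a, x⟫}` or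
`{x | t < ⟪a, x⟫}`. -/
def IsSphereCap (R : ℝ) (a : E) (B : Set E) : Prop :=
  ∀ x ∈ sphere (0 : E) R ∩ B, ∀ y ∈ sphere (0 : E) R, ⟪a, x⟫ ≤ ⟪a, y⟫ → y ∈ B

theorem isSphereCap_ball (R : ℝ) (a : E) (r : ℝ) : IsSphereCap R a (ball a r) :=
  fun x hx y hy h => (dist_le_dist_of_norm_eq_of_inner_le
    (by rw [mem_sphere_zero_iff_norm.1 hy, mem_sphere_zero_iff_norm.1 hx.1]) h).trans_lt hx.2

theorem isSphereCap_closedBall (R : ℝ) (a : E) (r : ℝ) : IsSphereCap R a (closedBall a r) :=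
  fun x hx y hy h => (dist_le_dist_of_norm_eq_of_inner_le
    (by rw [mem_sphere_zero_iff_norm.1 hy, mem_sphere_zero_iff_norm.1 hx.1]) h).trans hx.2

theorem isSphereCap_compl_ball (R : ℝ) (a : E) (r : ℝ) : IsSphereCap R (-a) (ball a r)ᶜ :=
  fun x hx y hy h hya => hx.2 <| (dist_le_dist_of_norm_eq_of_inner_le
    (by rw [mem_sphere_zero_iff_norm.1 hy, mem_sphere_zero_iff_norm.1 hx.1])
    (by simpa only [inner_neg_left, neg_le_neg_iff] using h)).trans_lt hya

theorem IsSphereCap.joinedIn_inter_sphere {R : ℝ} {a : E} {B : Set E} (hB : IsSphereCap R a B)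
    (hE : 3 ≤ Module.finrank ℝ E) {c p q : E} (hp : p ∈ sphere 0 R ∩ B) (hq : q ∈ sphere 0 R ∩ B)
    (hpq : dist p c = dist q c) : JoinedIn (sphere 0 R ∩ B ∩ sphere c (dist p c)) p q := by
  have hn' := mem_sphere_zero_iff_norm.1 hp.1
  have hn : ‖p‖ = ‖q‖ := hn'.trans (mem_sphere_zero_iff_norm.1 hq.1).symm
  refine (joinedIn_norm_eq_inner_eq hE a hn (inner_eq_of_norm_eq_of_dist_eq hn hpq)).mono ?_
  rintro x ⟨hxn, hxc, hxa⟩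
  have hxS : x ∈ sphere (0 : E) R := mem_sphere_zero_iff_norm.2 (hxn.trans hn')
  refine ⟨⟨hxS, ?_⟩, ?_⟩
  · rcases min_choice ⟪a, p⟫ ⟪a, q⟫ with h | h <;> rw [h] at hxa
    · exact hB p hp x hxS hxa
    · exact hB q hq x hxS hxa
  · exact mem_sphere.2 (le_antisymm (dist_le_dist_of_norm_eq_of_inner_le hxn hxc.ge)
      (dist_le_dist_of_norm_eq_of_inner_le hxn.symm hxc.le))

theorem joinedIn_sphere_inter_diff_iUnion_closedBall (hE : 3 ≤ Module.finrank ℝ E) {R : ℝ}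
    {a : E} {B : Set E} (hB : IsSphereCap R a B) {ι : Type*} [Finite ι] {c : ι → E} {ρ : ι → ℝ}
    (hd : Pairwise (Disjoint on fun i => sphere (0 : E) R ∩ closedBall (c i) (ρ i))) {x y : E}
    (hx : x ∈ (sphere 0 R ∩ B) \ ⋃ i, closedBall (c i) (ρ i))
    (hy : y ∈ (sphere 0 R ∩ B) \ ⋃ i, closedBall (c i) (ρ i)) :
    JoinedIn ((sphere 0 R ∩ B) \ ⋃ i, closedBall (c i) (ρ i)) x y := by
  have : FiniteDimensional ℝ E := Module.finite_of_finrank_pos (by omega)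
  have hfar : ∀ z ∉ ⋃ i, closedBall (c i) (ρ i), ∀ᶠ δ in 𝓝 0, ∀ i, ρ i + δ < dist z (c i) :=
    fun z hz => eventually_all.2 fun i =>
      ((continuous_const.add continuous_id).tendsto' 0 (ρ i) (add_zero _)).eventually_lt_const
        (lt_of_not_ge fun h => hz (mem_iUnion.2 ⟨i, h⟩))
  obtain ⟨δ, ⟨hdδ, hxδ, hyδ⟩, hδ⟩ :=
    ((((isCompact_sphere 0 R).eventually_pairwise_disjoint_inter_closedBall_add hd).and
      ((hfar x hx.2).and (hfar y hy.2))).filter_mono nhdsWithin_le_nhds).and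
      (self_mem_nhdsWithin (s := Ioi 0)) |>.exists
  have hT : JoinedIn (sphere 0 R ∩ B) x y := by
    refine (hB.joinedIn_inter_sphere hE hx.1 hy.1 (c := 0) ?_).mono inter_subset_left
    rw [dist_zero_right, dist_zero_right, mem_sphere_zero_iff_norm.1 hx.1.1,
      mem_sphere_zero_iff_norm.1 hy.1.1]
  refine (hT.diff_iUnion_of_frontier (U := fun i => ball (c i) (ρ i + δ)) (fun i => isOpen_ball)
    ?_ ?_ ?_).mono (sdiff_subset_sdiff_right (iUnion_mono fun i =>
      closedBall_subset_ball (by linarith [show 0 < δ from hδ])))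
  · simpa using fun i => (hxδ i).le
  · simpa using fun i => (hyδ i).le
  intro i p hp q hq
  have hpS := frontier_ball_subset_sphere hp.2
  have hqS := frontier_ball_subset_sphere hq.2
  rw [mem_sphere] at hpS hqS
  refine (hB.joinedIn_inter_sphere hE hp.1 hq.1 (hpS.trans hqS.symm)).mono ?_
  rintro z ⟨hzT, hz⟩
  rw [hpS] at hz
  refine ⟨hzT, mem_iUnion.not.2 fun ⟨j, hj⟩ => ?_⟩
  rcases eq_or_ne i j with rfl | hij
  · exact (mem_sphere.1 hz).not_lt hj
  · exact disjoint_left.1 (hdδ hij) ⟨hzT.1, sphere_subset_closedBall hz⟩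
      ⟨hzT.1, ball_subset_closedBall hj⟩

theorem isPathConnected_preimage_diff_iUnion_closedBall (hE : 3 ≤ Module.finrank ℝ E) {R : ℝ}
    {a : E} {B : Set E} (hB : IsSphereCap R a B) {ι : Type*} [Finite ι]
    {c : ι → sphere (0 : E) R} {ρ : ι → ℝ}
    (hd : Pairwise (Disjoint on fun i => closedBall (c i) (ρ i)))
    (hne : ((↑) ⁻¹' B \ ⋃ i, closedBall (c i) (ρ i)).Nonempty) :
    IsPathConnected ((↑) ⁻¹' B \ ⋃ i, closedBall (c i) (ρ i)) := by
  have hd' : Pairwise (Disjoint on fun i => sphere (0 : E) R ∩ closedBall (c i : E) (ρ i)) :=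
    fun i j hij => by
      simpa only [onFun, Subtype.image_closedBall, ofPred_mem_eq, inter_comm] using
        (disjoint_image_iff Subtype.val_injective).2 (hd hij)
  refine isPathConnected_iff.2 ⟨hne, fun x hx y hy => ?_⟩
  rw [← Topology.IsInducing.subtypeVal.joinedIn_image hx hy,
    image_val_preimage_diff_iUnion_closedBall]
  have hmem := fun z (hz : z ∈ (↑) ⁻¹' B \ ⋃ i, closedBall (c i) (ρ i)) =>
    image_val_preimage_diff_iUnion_closedBall B c ρ ▸ mem_image_of_mem Subtype.val hz
  exact joinedIn_sphere_inter_diff_iUnion_closedBall hE hB hd' (hmem x hx) (hmem y hy)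

end InnerProductSpace

theorem circleDomain_one_LLC_general {n : ℕ}
    (c : Fin n → ↥(sphere (0 : EuclideanSpace ℝ (Fin 3)) 1))
    (ρ : Fin n → ℝ)
    (hdisj : Pairwise (Function.onFun Disjoint fun i => closedBall (c i) (ρ i)))
    (V : Set ↥(sphere (0 : EuclideanSpace ℝ (Fin 3)) 1))
    (hV : V = Set.univ \ ⋃ i, closedBall (c i) (ρ i)) :
    (∀ (a : ↥(sphere (0 : EuclideanSpace ℝ (Fin 3)) 1)) (r : ℝ),
      (ball a r ∩ V).Nonempty → IsPathConnected (ball a r ∩ V)) ∧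
    (∀ (a : ↥(sphere (0 : EuclideanSpace ℝ (Fin 3)) 1)) (r : ℝ),
      (closedBall a r ∩ V).Nonempty → IsPathConnected (closedBall a r ∩ V)) ∧
    (∀ (a : ↥(sphere (0 : EuclideanSpace ℝ (Fin 3)) 1)) (r : ℝ) (x y),
      x ∈ V ∩ ball a r → y ∈ V ∩ ball a r →
      ∃ E : Set ↥(sphere (0 : EuclideanSpace ℝ (Fin 3)) 1),
        IsCompact E ∧ IsConnected E ∧ x ∈ E ∧ y ∈ E ∧ E ⊆ V ∩ ball a r) ∧
    (∀ (a : ↥(sphere (0 : EuclideanSpace ℝ (Fin 3)) 1)) (r : ℝ) (x y),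
      x ∈ V \ ball a r → y ∈ V \ ball a r →
      ∃ E : Set ↥(sphere (0 : EuclideanSpace ℝ (Fin 3)) 1),
        IsCompact E ∧ IsConnected E ∧ x ∈ E ∧ y ∈ E ∧ E ⊆ V \ ball a r) := by
  have key : ∀ {a : EuclideanSpace ℝ (Fin 3)} {B}, IsSphereCap 1 a B →
      ((↑) ⁻¹' B ∩ V).Nonempty → IsPathConnected ((↑) ⁻¹' B ∩ V) := fun hB hne => by
    rw [hV, ← inter_sdiff_assoc, inter_univ] at hne ⊢
    exact isPathConnected_preimage_diff_iUnion_closedBall (by simp) hB hdisj hne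
  refine ⟨fun a r => key (B := ball a.1 r) (isSphereCap_ball 1 _ r),
    fun a r => key (B := closedBall a.1 r) (isSphereCap_closedBall 1 _ r),
    fun a r x y hx hy => ?_, fun a r x y hx hy => ?_⟩
  · rw [inter_comm] at hx hy ⊢
    exact ((key (B := ball a.1 r) (isSphereCap_ball 1 _ r) ⟨x, hx⟩).joinedIn x hx y hy
      ).exists_isCompact_isConnected
  · rw [Set.sdiff_eq, inter_comm] at hx hy ⊢
    exact ((key (B := (ball a.1 r)ᶜ) (isSphereCap_compl_ball 1 _ r) ⟨x, hx⟩).joinedIn x hx y hy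
      ).exists_isCompact_isConnected

/-- Every finitely connected circle domain `V` in the chordal Riemann sphere (the unit
sphere in `ℝ³`), i.e. the complement of finitely many pairwise disjoint closed (possibly
degenerate) round disks, is `1`-LLC: for every open or closed round ball `B`, the set
`B ∩ V` is path-connected whenever it is nonempty; consequently any two points of
`V ∩ B(a,r)` lie in a continuum inside `V ∩ B(a,r)`, and any two points of
`V \ B(a,r)` lie in a continuum inside `V \ B(a,r)`. -/
theorem circleDomain_one_LLC {n : ℕ}
    (c : Fin n → ↥(sphere (0 : EuclideanSpace ℝ (Fin 3)) 1))
    (ρ : Fin n → ℝ) (hρ : ∀ i, 0 ≤ ρ i)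
    (hdisj : Pairwise (Function.onFun Disjoint fun i => closedBall (c i) (ρ i)))
    (V : Set ↥(sphere (0 : EuclideanSpace ℝ (Fin 3)) 1))
    (hV : V = Set.univ \ ⋃ i, closedBall (c i) (ρ i)) :
    (∀ (a : ↥(sphere (0 : EuclideanSpace ℝ (Fin 3)) 1)) (r : ℝ),
      (ball a r ∩ V).Nonempty → IsPathConnected (ball a r ∩ V)) ∧
    (∀ (a : ↥(sphere (0 : EuclideanSpace ℝ (Fin 3)) 1)) (r : ℝ),
      (closedBall a r ∩ V).Nonempty → IsPathConnected (closedBall a r ∩ V)) ∧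
    (∀ (a : ↥(sphere (0 : EuclideanSpace ℝ (Fin 3)) 1)) (r : ℝ) (x y),
      x ∈ V ∩ ball a r → y ∈ V ∩ ball a r →
      ∃ E : Set ↥(sphere (0 : EuclideanSpace ℝ (Fin 3)) 1),
        IsCompact E ∧ IsConnected E ∧ x ∈ E ∧ y ∈ E ∧ E ⊆ V ∩ ball a r) ∧
    (∀ (a : ↥(sphere (0 : EuclideanSpace ℝ (Fin 3)) 1)) (r : ℝ) (x y),
      x ∈ V \ ball a r → y ∈ V \ ball a r →
      ∃ E : Set ↥(sphere (0 : EuclideanSpace ℝ (Fin 3)) 1),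
        IsCompact E ∧ IsConnected E ∧ x ∈ E ∧ y ∈ E ∧ E ⊆ V \ ball a r) :=
  circleDomain_one_LLC_general c ρ hdisj V hV
end

section
/- Let S be a metric circle (a metric space homeomorphic to a circle) that is N-doubling and satisfies the arc condition: there is k ≥ 1 such that for all distinct x,y ∈ S, one of the two subarcs γ of S with endpoints x and y satisfies diam(γ) ≤ k·d(x,y). Then there exists δ = δ(k) > 0 such that for all four points x1,x2,x3,x4 in cyclic order on S, the cross-ratio satisfies [x1,x2,x3,x4] = d(x1,x3)d(x2,x4)/(d(x1,x4)d(x2,x3)) ≥ δ. -/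
open Metric

section Auxiliary

open Set

/-- In `AddCircle T`, the complement of a preconnected set is preconnected. -/
lemma addCircle_compl_preconnected {T : ℝ} [hT : Fact (0 < T)] {C : Set (AddCircle T)}
    (hC : IsPreconnected C) : IsPreconnected Cᶜ := by
  apply isPreconnected_of_forall_pair
  intro x hx y hy
  rcases eq_or_ne x y with rfl | hxy
  · exact ⟨{x}, singleton_subset_iff.2 hx, rfl, rfl, isPreconnected_singleton⟩
  obtain ⟨a, rfl⟩ : ∃ a : ℝ, (a : AddCircle T) = x := Quotient.exists_rep x
  obtain ⟨b, hbmem, hby⟩ : ∃ b : ℝ, b ∈ Ioc a (a + T) ∧ (b : AddCircle T) = y :=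
    ⟨_, (AddCircle.equivIoc T a y).2, (AddCircle.equivIoc T a).symm_apply_apply y⟩
  have hbne : b ≠ a + T := by
    rintro rfl
    exact hxy (by rw [← hby, AddCircle.coe_add_period])
  have hab : a < b := hbmem.1
  have hbT : b < a + T := lt_of_le_of_ne hbmem.2 hbne
  have hinj : ∀ s t : ℝ, s ∈ Ico a (a + T) → t ∈ Ico a (a + T) →
      (s : AddCircle T) = (t : AddCircle T) → s = t := fun s t hs ht h =>
    (AddCircle.coe_eq_coe_iff_of_mem_Ico hs ht).1 h
  set U : Set (AddCircle T) := ((↑) : ℝ → AddCircle T) '' Ioo a b with hU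
  set V : Set (AddCircle T) := ((↑) : ℝ → AddCircle T) '' Ioo b (a + T) with hV
  have hUopen : IsOpen U := QuotientAddGroup.isOpenMap_coe _ isOpen_Ioo
  have hVopen : IsOpen V := QuotientAddGroup.isOpenMap_coe _ isOpen_Ioo
  have hUV : U ∩ V = ∅ := by
    ext z; simp only [mem_inter_iff, mem_empty_iff_false, iff_false]
    rintro ⟨⟨s, hs, rfl⟩, ⟨t, ht, hst⟩⟩
    have hs' : s ∈ Ico a (a + T) := ⟨le_of_lt hs.1, hs.2.trans hbT⟩
    have ht' : t ∈ Ico a (a + T) := ⟨le_of_lt (hab.trans ht.1), ht.2⟩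
    have hts := hinj t s ht' hs' hst
    rw [hts] at ht
    exact absurd hs.2 (not_lt.2 (le_of_lt ht.1))
  have hcover : ∀ z : AddCircle T, z ≠ (a : AddCircle T) → z ≠ y → z ∈ U ∪ V := by
    intro z hzx hzy
    obtain ⟨c, hcmem, hcz⟩ : ∃ c : ℝ, c ∈ Ioc a (a + T) ∧ (c : AddCircle T) = z :=
      ⟨_, (AddCircle.equivIoc T a z).2, (AddCircle.equivIoc T a).symm_apply_apply z⟩
    have hcb : c ≠ b := by rintro rfl; exact hzy (hcz ▸ hby)
    have hcT : c ≠ a + T := by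
      rintro rfl
      exact hzx (by rw [← hcz, AddCircle.coe_add_period])
    rcases lt_or_gt_of_ne hcb with h | h
    · exact Or.inl ⟨c, ⟨hcmem.1, h⟩, hcz⟩
    · exact Or.inr ⟨c, ⟨h, lt_of_le_of_ne hcmem.2 hcT⟩, hcz⟩
  have key : U ∩ C = ∅ ∨ V ∩ C = ∅ := by
    by_contra h
    push_neg at h
    obtain ⟨h1, h2⟩ := h
    have hsub : C ⊆ U ∪ V := fun z hz =>
      hcover z (fun e => hx (e ▸ hz)) (fun e => hy (e ▸ hz))
    obtain ⟨z, hzC, hzUV⟩ := hC U V hUopen hVopen hsub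
      (by obtain ⟨z, hzU, hzC⟩ := h1; exact ⟨z, hzC, hzU⟩)
      (by obtain ⟨z, hzV, hzC⟩ := h2; exact ⟨z, hzC, hzV⟩)
    rw [hUV] at hzUV
    exact hzUV
  rcases key with h | h
  · refine ⟨((↑) : ℝ → AddCircle T) '' Icc a b, ?_, ⟨a, ⟨le_refl a, le_of_lt hab⟩, rfl⟩,
      ⟨b, ⟨le_of_lt hab, le_refl b⟩, hby⟩,
      (isPreconnected_Icc.image _ (AddCircle.continuous_mk' T).continuousOn)⟩
    rintro z ⟨s, hs, rfl⟩ hzC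
    have hzx : (s : AddCircle T) ≠ (a : AddCircle T) := fun e => hx (e ▸ hzC)
    have hzy : (s : AddCircle T) ≠ y := fun e => hy (e ▸ hzC)
    have hsa : s ≠ a := by rintro rfl; exact hzx rfl
    have hsb : s ≠ b := by rintro rfl; exact hzy hby
    have hmem : (s : AddCircle T) ∈ U ∩ C :=
      ⟨⟨s, ⟨lt_of_le_of_ne hs.1 (Ne.symm hsa), lt_of_le_of_ne hs.2 hsb⟩, rfl⟩, hzC⟩
    rw [h] at hmem
    exact hmem
  · refine ⟨((↑) : ℝ → AddCircle T) '' Icc b (a + T), ?_,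
      ⟨a + T, ⟨le_of_lt hbT, le_refl _⟩, AddCircle.coe_add_period T a⟩,
      ⟨b, ⟨le_refl b, le_of_lt hbT⟩, hby⟩,
      (isPreconnected_Icc.image _ (AddCircle.continuous_mk' T).continuousOn)⟩
    rintro z ⟨s, hs, rfl⟩ hzC
    have hzx : (s : AddCircle T) ≠ (a : AddCircle T) := fun e => hx (e ▸ hzC)
    have hzy : (s : AddCircle T) ≠ y := fun e => hy (e ▸ hzC)
    have hsb : s ≠ b := by rintro rfl; exact hzy hby
    have hsT : s ≠ a + T := by rintro rfl; exact hzx (AddCircle.coe_add_period T a)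
    have hmem : (s : AddCircle T) ∈ V ∩ C :=
      ⟨⟨s, ⟨lt_of_le_of_ne hs.1 (Ne.symm hsb), lt_of_le_of_ne hs.2 hsT⟩, rfl⟩, hzC⟩
    rw [h] at hmem
    exact hmem

/-- The property "complement of a preconnected set is preconnected" transfers along
homeomorphisms. -/
lemma compl_preconn_transfer {X Y : Type*} [TopologicalSpace X] [TopologicalSpace Y]
    (f : X ≃ₜ Y) (h : ∀ C : Set Y, IsPreconnected C → IsPreconnected Cᶜ)
    (C : Set X) (hC : IsPreconnected C) : IsPreconnected Cᶜ := by
  have h1 : IsPreconnected ((f '' C)ᶜ) := h _ (hC.image f f.continuous.continuousOn)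
  have h2 : IsPreconnected (f.symm '' (f '' C)ᶜ) :=
    h1.image _ f.symm.continuous.continuousOn
  have h3 : f.symm '' (f '' C)ᶜ = Cᶜ := by
    rw [Set.image_compl_eq f.symm.bijective]
    congr 1
    exact Equiv.symm_image_image f.toEquiv C
  rwa [h3] at h2

/-- The unit sphere in `ℂ` is homeomorphic to `Circle`. -/
noncomputable def sphereCircleHomeo : ↥(sphere (0:ℂ) 1) ≃ₜ Circle where
  toFun z := ⟨z.1, z.2⟩
  invFun z := ⟨z.1, z.2⟩
  left_inv _ := rfl
  right_inv _ := rfl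
  continuous_toFun := Continuous.subtype_mk continuous_subtype_val _
  continuous_invFun := Continuous.subtype_mk continuous_subtype_val _

/-- In the unit sphere of `ℂ`, the complement of a preconnected set is preconnected. -/
lemma sphere_compl_preconnected :
    ∀ C : Set ↥(sphere (0:ℂ) 1), IsPreconnected C → IsPreconnected Cᶜ := by
  haveI : Fact ((0:ℝ) < 1) := ⟨one_pos⟩
  exact compl_preconn_transfer
    (sphereCircleHomeo.trans (AddCircle.homeomorphCircle (one_ne_zero : (1:ℝ) ≠ 0)).symm)
    (fun D hD => addCircle_compl_preconnected hD)

end Auxiliary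

/-- If a metric circle `S` (a doubling metric space homeomorphic to the circle)
satisfies the arc condition with constant `k` — any two points `x, y` are contained in a
connected subset (a subarc) of diameter at most `k·d(x,y)` — then there exists
`δ = δ(k) > 0` such that every `4`-tuple of distinct points in cyclic order on `S` has
cross-ratio at least `δ`. -/
theorem metric_circle_crossRatio_lowerBound :
    ∀ k : ℝ, 1 ≤ k → ∃ δ : ℝ, 0 < δ ∧
      ∀ (S : Type) [MetricSpace S],
        Nonempty (S ≃ₜ ↥(sphere (0 : ℂ) 1)) →
        (∃ N : ℕ, ∀ (x : S) (r : ℝ), ∃ F : Finset S, F.card ≤ N ∧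
          ball x r ⊆ ⋃ y ∈ F, ball y (r / 2)) →
        (∀ x y : S, ∃ C : Set S, IsConnected C ∧ x ∈ C ∧ y ∈ C ∧
          diam C ≤ k * dist x y) →
        ∀ x1 x2 x3 x4 : S,
          x1 ≠ x2 → x1 ≠ x3 → x1 ≠ x4 → x2 ≠ x3 → x2 ≠ x4 → x3 ≠ x4 →
          x2 ∈ ({x1, x3}ᶜ : Set S) → x4 ∈ ({x1, x3}ᶜ : Set S) →
          x4 ∉ connectedComponentIn ({x1, x3}ᶜ : Set S) x2 →
          δ ≤ dist x1 x3 * dist x2 x4 / (dist x1 x4 * dist x2 x3) := by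
  intro k hk
  have hk0 : (0:ℝ) < k := lt_of_lt_of_le one_pos hk
  refine ⟨1 / (k * (k + 1)), by positivity, ?_⟩
  intro S _ hhomeo _hdoub harc x1 x2 x3 x4 h12 h13 h14 h23 h24 h34 hx2 hx4 hsep
  obtain ⟨e⟩ := hhomeo
  -- `S` is compact, hence every subset is bounded
  haveI : CompactSpace S := e.symm.compactSpace
  have hbdd : ∀ C : Set S, Bornology.IsBounded C := fun C =>
    (isCompact_univ.isBounded).subset (Set.subset_univ C)
  -- complements of preconnected sets in `S` are preconnected
  have hpre : ∀ C : Set S, IsPreconnected C → IsPreconnected Cᶜ :=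
    compl_preconn_transfer e sphere_compl_preconnected
  -- notation for the six distances
  have ha : 0 < dist x1 x3 := dist_pos.2 h13
  have hb : 0 < dist x2 x4 := dist_pos.2 h24
  have hu : 0 < dist x1 x4 := dist_pos.2 h14
  have hv : 0 < dist x2 x3 := dist_pos.2 h23
  -- arc joining x2 and x4
  obtain ⟨C, hCconn, hx2C, hx4C, hCdiam⟩ := harc x2 x4
  -- arc joining x1 and x3
  obtain ⟨C', hC'conn, hx1C', hx3C', hC'diam⟩ := harc x1 x3
  -- C must contain x1 or x3
  have hCmeets : x1 ∈ C ∨ x3 ∈ C := by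
    by_contra h
    push_neg at h
    have hsub : C ⊆ ({x1, x3}ᶜ : Set S) := by
      intro z hz
      simp only [Set.mem_compl_iff, Set.mem_insert_iff, Set.mem_singleton_iff]
      rintro (rfl | rfl)
      · exact h.1 hz
      · exact h.2 hz
    exact hsep ((hCconn.isPreconnected.subset_connectedComponentIn hx2C hsub) hx4C)
  -- C' must contain x2 or x4
  have hC'meets : x2 ∈ C' ∨ x4 ∈ C' := by
    by_contra h
    push_neg at h
    have hpreC' : IsPreconnected (C'ᶜ) := hpre C' hC'conn.isPreconnected
    have hsub : C'ᶜ ⊆ ({x1, x3}ᶜ : Set S) := by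
      intro z hz
      simp only [Set.mem_compl_iff, Set.mem_insert_iff, Set.mem_singleton_iff]
      rintro (rfl | rfl)
      · exact hz hx1C'
      · exact hz hx3C'
    exact hsep ((hpreC'.subset_connectedComponentIn h.1 hsub) h.2)
  -- distance bounds from the two arcs
  have dC : ∀ p q : S, p ∈ C → q ∈ C → dist p q ≤ k * dist x2 x4 := fun p q hp hq =>
    le_trans (dist_le_diam_of_mem (hbdd C) hp hq) hCdiam
  have dC' : ∀ p q : S, p ∈ C' → q ∈ C' → dist p q ≤ k * dist x1 x3 := fun p q hp hq =>
    le_trans (dist_le_diam_of_mem (hbdd C') hp hq) hC'diam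
  -- final computation
  rw [div_le_div_iff₀ (by positivity) (by positivity)]
  have triangle1 : dist x2 x3 ≤ dist x1 x2 + dist x1 x3 := by
    have := dist_triangle x2 x1 x3; rwa [dist_comm x2 x1] at this
  have triangle2 : dist x1 x4 ≤ dist x1 x2 + dist x2 x4 := dist_triangle x1 x2 x4
  rcases hCmeets with h1C | h3C <;> rcases hC'meets with h2C' | h4C'
  · -- x1 ∈ C, x2 ∈ C' : u ≤ k b, v ≤ k a
    have hub : dist x1 x4 ≤ k * dist x2 x4 := dC x1 x4 h1C hx4C
    have hva : dist x2 x3 ≤ k * dist x1 x3 := dC' x2 x3 h2C' hx3C'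
    nlinarith [mul_le_mul hub hva (le_of_lt hv) (by positivity : (0:ℝ) ≤ k * dist x2 x4),
      mul_pos ha hb]
  · -- x1 ∈ C, x4 ∈ C'
    have hub : dist x1 x4 ≤ k * dist x2 x4 := dC x1 x4 h1C hx4C
    have hua : dist x1 x4 ≤ k * dist x1 x3 := dC' x1 x4 hx1C' h4C'
    have h12b : dist x1 x2 ≤ k * dist x2 x4 := dC x1 x2 h1C hx2C
    have hvab : dist x2 x3 ≤ k * dist x2 x4 + dist x1 x3 := by linarith
    rcases le_total (dist x1 x3) (dist x2 x4) with hab | hab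
    · have hv' : dist x2 x3 ≤ (k + 1) * dist x2 x4 := by nlinarith
      nlinarith [mul_le_mul hua hv' (le_of_lt hv) (by positivity : (0:ℝ) ≤ k * dist x1 x3)]
    · have hv' : dist x2 x3 ≤ (k + 1) * dist x1 x3 := by
        nlinarith [mul_le_mul_of_nonneg_left hab (le_of_lt hk0)]
      nlinarith [mul_le_mul hub hv' (le_of_lt hv) (by positivity : (0:ℝ) ≤ k * dist x2 x4)]
  · -- x3 ∈ C, x2 ∈ C'
    have hvb : dist x2 x3 ≤ k * dist x2 x4 := dC x2 x3 hx2C h3C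
    have hva : dist x2 x3 ≤ k * dist x1 x3 := dC' x2 x3 h2C' hx3C'
    have h12a : dist x1 x2 ≤ k * dist x1 x3 := dC' x1 x2 hx1C' h2C'
    have huab : dist x1 x4 ≤ k * dist x1 x3 + dist x2 x4 := by linarith
    rcases le_total (dist x1 x3) (dist x2 x4) with hab | hab
    · have hu' : dist x1 x4 ≤ (k + 1) * dist x2 x4 := by
        nlinarith [mul_le_mul_of_nonneg_left hab (le_of_lt hk0)]
      nlinarith [mul_le_mul hu' hva (le_of_lt hv) (by positivity : (0:ℝ) ≤ (k+1) * dist x2 x4)]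
    · have hu' : dist x1 x4 ≤ (k + 1) * dist x1 x3 := by nlinarith
      nlinarith [mul_le_mul hu' hvb (le_of_lt hv) (by positivity : (0:ℝ) ≤ (k+1) * dist x1 x3)]
  · -- x3 ∈ C, x4 ∈ C' : v ≤ k b, u ≤ k a
    have hvb : dist x2 x3 ≤ k * dist x2 x4 := dC x2 x3 hx2C h3C
    have hua : dist x1 x4 ≤ k * dist x1 x3 := dC' x1 x4 hx1C' h4C'
    nlinarith [mul_le_mul hua hvb (le_of_lt hv) (by positivity : (0:ℝ) ≤ k * dist x1 x3),
      mul_pos ha hb]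
end

section
/- Conversely, let S be a metric circle that is N-doubling and satisfies: there exists δ > 0 such that every 4-tuple x1,x2,x3,x4 of points in cyclic order on S has cross-ratio [x1,x2,x3,x4] ≥ δ. Then there is k = k(δ) ≥ 1 such that for all distinct x,y ∈ S, one of the two subarcs of S joining x to y has diameter at most k·d(x,y). (One may take k = 3/ε₀ where ε₀ = ε₀(δ) comes from the modified cross-ratio comparison.) -/
/-!
Suppose both arcs of `S` between `x` and `y` had diameter larger than `2 (t + 1) d(x, y)`.
Picking `u` on the first arc far from `x` and `v` on the second arc far from `y`, the
points `x, u, y, v` are in cyclic order, while `d(u, y)` and `d(x, v)` both exceed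
`t d(x, y)`. The triangle inequality `d(u, v) ≤ d(u, y) + d(x, y) + d(x, v)` then forces
the cross-ratio `[x, u, y, v]` below `3 / t`, which is smaller than `δ` once `t ≥ 3 / δ`.
-/

open Metric Set

theorem exists_mem_lt_dist_of_two_mul_lt_diam {α : Type*} [PseudoMetricSpace α] {s : Set α}
    (p : α) {r : ℝ} (hr : 0 ≤ r) (h : 2 * r < diam s) : ∃ q ∈ s, r < dist p q := by
  by_contra! hnear
  refine h.not_ge (diam_le_of_forall_dist_le (by positivity) fun u hu v hv => ?_)
  calc dist u v ≤ dist p u + dist p v := dist_triangle_left u v p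
    _ ≤ 2 * r := by linarith [hnear u hu, hnear v hv]

theorem dist_mul_dist_div_lt_three_div {α : Type*} [PseudoMetricSpace α] {x y u v : α}
    {t : ℝ} (ht : 1 ≤ t) (hxy : 0 < dist x y) (hu : t * dist x y < dist u y)
    (hv : t * dist x y < dist x v) :
    dist x y * dist u v / (dist x v * dist u y) < 3 / t := by
  have huv : dist u v ≤ dist u y + dist x y + dist x v := by
    linarith [dist_triangle u y x, dist_triangle u x v, dist_comm y x]
  have htd : 0 < t * dist x y := mul_pos (zero_lt_one.trans_le ht) hxy
  have ha : 0 < dist u y := htd.trans hu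
  have hb : 0 < dist x v := htd.trans hv
  rw [div_lt_div_iff₀ (by positivity) (by positivity)]
  calc dist x y * dist u v * t
      ≤ t * dist x y * (dist u y + dist x y + dist x v) := by
        rw [mul_comm t, mul_right_comm]; gcongr
    _ = t * dist x y * dist u y + t * dist x y * dist x y + t * dist x y * dist x v := by ring
    _ < dist x v * dist u y + dist u y * dist x v + dist u y * dist x v := by
        gcongr ?_ + ?_ + ?_
        · exact mul_lt_mul_of_pos_right hv ha
        · exact mul_lt_mul'' hu ((le_mul_of_one_le_left hxy.le ht).trans_lt hv) htd.le hxy.le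
        · exact mul_lt_mul_of_pos_right hu hb
    _ = 3 * (dist x v * dist u y) := by ring

theorem notMem_connectedComponentIn_compl_inter {X : Type*} [TopologicalSpace X]
    {A B : Set X} (hA : IsClosed A) (hB : IsClosed B) (hAB : A ∪ B = univ) {u v : X}
    (hu : u ∈ A) (hv : v ∈ B) : v ∉ connectedComponentIn (A ∩ B)ᶜ u := by
  intro hvK
  have huK : u ∈ connectedComponentIn (A ∩ B)ᶜ u :=
    mem_connectedComponentIn (connectedComponentIn_nonempty_iff.1 ⟨v, hvK⟩)
  have hdisj : Disjoint Bᶜ Aᶜ := by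
    rw [disjoint_compl_left_iff_subset, compl_subset_iff_union, hAB]
  have hcover : connectedComponentIn (A ∩ B)ᶜ u ⊆ Bᶜ ∪ Aᶜ := by
    rw [union_comm, ← compl_inter]
    exact connectedComponentIn_subset _ _
  rcases isPreconnected_connectedComponentIn.subset_or_subset hB.isOpen_compl
    hA.isOpen_compl hdisj hcover with h | h
  · exact h hvK hv
  · exact h huK hu

theorem Homeomorph.exists_arcs_of_ne {X : Type*} [TopologicalSpace X] (e : X ≃ₜ Circle)
    {x y : X} (hxy : x ≠ y) :
    ∃ A B : Set X, IsConnected A ∧ IsConnected B ∧ IsClosed A ∧ IsClosed B ∧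
      A ∪ B = univ ∧ A ∩ B = {x, y} := by
  have he : e x ≠ e y := e.injective.ne hxy
  refine ⟨e ⁻¹' range (Circle.path (e x) (e y)), e ⁻¹' range (Circle.path (e y) (e x)),
    e.isConnected_preimage.2 (isConnected_range (Circle.path _ _).continuous),
    e.isConnected_preimage.2 (isConnected_range (Circle.path _ _).continuous),
    (isCompact_range (Circle.path _ _).continuous).isClosed.preimage e.continuous,
    (isCompact_range (Circle.path _ _).continuous).isClosed.preimage e.continuous, ?_, ?_⟩
  · rw [← preimage_union, Circle.range_path_union_range_path he, preimage_univ]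
  · rw [← preimage_inter, Circle.range_path_inter_range_path he]
    ext z
    simp [e.injective.eq_iff]

/-- Conversely, if a doubling metric circle `S` has all cross-ratios of `4`-tuples in
cyclic order bounded below by `δ > 0`, then there is `k = k(δ) ≥ 1` such that any two
distinct points `x, y ∈ S` are contained in a connected subset (a subarc) of diameter
at most `k·d(x,y)`. -/
theorem metric_circle_arc_condition_of_crossRatio :
    ∀ δ : ℝ, 0 < δ → ∃ k : ℝ, 1 ≤ k ∧
      ∀ (S : Type) [MetricSpace S],
        Nonempty (S ≃ₜ ↥(sphere (0 : ℂ) 1)) →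
        (∃ N : ℕ, ∀ (x : S) (r : ℝ), ∃ F : Finset S, F.card ≤ N ∧
          ball x r ⊆ ⋃ y ∈ F, ball y (r / 2)) →
        (∀ x1 x2 x3 x4 : S,
          x1 ≠ x2 → x1 ≠ x3 → x1 ≠ x4 → x2 ≠ x3 → x2 ≠ x4 → x3 ≠ x4 →
          x2 ∈ ({x1, x3}ᶜ : Set S) → x4 ∈ ({x1, x3}ᶜ : Set S) →
          x4 ∉ connectedComponentIn ({x1, x3}ᶜ : Set S) x2 →
          δ ≤ dist x1 x3 * dist x2 x4 / (dist x1 x4 * dist x2 x3)) →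
        ∀ x y : S, x ≠ y → ∃ C : Set S, IsConnected C ∧ x ∈ C ∧ y ∈ C ∧
          diam C ≤ k * dist x y := by
  intro δ hδ
  set t := max 1 (3 / δ)
  have ht : 1 ≤ t := le_max_left _ _
  have htδ : 3 / t ≤ δ := (div_le_comm₀ (by positivity) hδ).2 (le_max_right _ _)
  refine ⟨2 * (t + 1), by linarith, ?_⟩
  rintro S _ ⟨e⟩ - hcr x y hxy
  -- `Circle` is by definition the unit sphere of `ℂ`.
  obtain ⟨A, B, hAc, hBc, hAcl, hBcl, hAB, hAiB⟩ :=
    (e.trans (Homeomorph.refl Circle)).exists_arcs_of_ne hxy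
  have hx : x ∈ A ∩ B := hAiB ▸ mem_insert x {y}
  have hy : y ∈ A ∩ B := hAiB ▸ mem_insert_of_mem x rfl
  by_contra! hlong
  simp only [mul_assoc] at hlong
  have hd : 0 < dist x y := dist_pos.2 hxy
  have hr : 0 ≤ (t + 1) * dist x y := by positivity
  obtain ⟨u, huA, hxu⟩ := exists_mem_lt_dist_of_two_mul_lt_diam x hr (hlong A hAc hx.1 hy.1)
  obtain ⟨v, hvB, hyv⟩ := exists_mem_lt_dist_of_two_mul_lt_diam y hr (hlong B hBc hx.2 hy.2)
  have huy : t * dist x y < dist u y := by linarith [dist_triangle x y u, dist_comm y u]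
  have hxv : t * dist x y < dist x v := by linarith [dist_triangle y x v, dist_comm x y]
  have hxu' : x ≠ u := dist_pos.1 (hr.trans_lt hxu)
  have hyv' : y ≠ v := dist_pos.1 (hr.trans_lt hyv)
  have huy' : u ≠ y := dist_pos.1 ((by positivity : 0 ≤ t * dist x y).trans_lt huy)
  have hxv' : x ≠ v := dist_pos.1 ((by positivity : 0 ≤ t * dist x y).trans_lt hxv)
  have hu : u ∈ ({x, y}ᶜ : Set S) := by simp [hxu'.symm, huy']
  have huv : u ≠ v := fun h => hu (hAiB ▸ ⟨huA, h ▸ hvB⟩)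
  have hsep := notMem_connectedComponentIn_compl_inter hAcl hBcl hAB huA hvB
  rw [hAiB] at hsep
  have hcross := hcr x u y v hxu' hxy hxv' huy' huv hyv' hu
    (by simp [hxv'.symm, hyv'.symm]) hsep
  linarith [dist_mul_dist_div_lt_three_div ht hd huy hxv]
end
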